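/- For a down-set Δ ⊆ 2^[n] with ∅ ∈ Δ and Δ ≠ 2^[n], letting 𝓜 be the blockers of Δ and 𝓜* the blockers of Δ*, one has ∑_{T* ⊆ 𝓜*} (−1)^{|T*|} 2^{−|⋃T*|} + ∑_{T ⊆ 𝓜} (−1)^{|T|} 2^{−|⋃T|} = 1, where sums range over all subfamilies including the empty one (with ⋃∅ = ∅). -/

import Mathlib

/-!
Multiplied by `2 ^ n`, the term of a subfamily `T` counts the sets containing `⋃ T`, so by
inclusion–exclusion each alternating sum counts the sets containing no blocker; for a down-set
these are exactly its faces. Hence the two sums are `#Δ / 2 ^ n` and `#Δ* / 2 ^ n`, and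
complementation matches the non-faces of `Δ` with the faces of `Δ*`.
-/

open Finset

/-- The Alexander dual of a family of subsets of `Fin n`. -/
def alexDual {n : ℕ} (Δ : Finset (Finset (Fin n))) : Finset (Finset (Fin n)) :=
  (Finset.univ.filter (fun σ => σ ∉ Δ)).image (fun σ => σᶜ)

section

variable {α : Type*} [DecidableEq α]

lemma mem_iff_forall_blocker_not_subset (Δ 𝓜 : Finset (Finset α))
    (hΔ : ∀ σ ∈ Δ, ∀ τ ⊆ σ, τ ∈ Δ) (h𝓜 : ∀ M, M ∈ 𝓜 ↔ M ∉ Δ ∧ ∀ τ ⊂ M, τ ∈ Δ)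
    (σ : Finset α) : σ ∈ Δ ↔ ∀ M ∈ 𝓜, ¬ M ⊆ σ := by
  refine ⟨fun hσ M hM hMσ => ((h𝓜 M).1 hM).1 (hΔ σ hσ M hMσ), fun h => ?_⟩
  by_contra hσ
  obtain ⟨M, hM, hmin⟩ :=
    exists_min_image {τ ∈ σ.powerset | τ ∉ Δ} card ⟨σ, by simpa using hσ⟩
  rw [mem_filter, mem_powerset] at hM
  refine h M ((h𝓜 M).2 ⟨hM.2, fun τ hτ => ?_⟩) hM.1
  by_contra hτΔ
  have := hmin τ (by simpa using ⟨hτ.subset.trans hM.1, hτΔ⟩)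
  exact (card_lt_card hτ).not_ge this

lemma mem_finset_inf_iff {ι β : Type*} [Fintype β] [DecidableEq β] (s : Finset ι)
    (S : ι → Finset β) (b : β) : b ∈ s.inf S ↔ ∀ i ∈ s, b ∈ S i := by
  simp only [← singleton_subset_iff, Finset.le_inf_iff]

variable [Fintype α]

lemma card_filter_superset (s : Finset α) : #{t : Finset α | s ⊆ t} = 2 ^ #sᶜ := by
  rw [← card_powerset]
  refine card_nbij' compl compl (fun t ht => ?_) (fun t ht => ?_) (fun t _ => compl_compl t)
    (fun t _ => compl_compl t)
  · simpa only [mem_coe, mem_filter, mem_univ, true_and, mem_powerset, compl_subset_compl] using ht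
  · simpa only [mem_coe, mem_filter, mem_univ, true_and, mem_powerset, subset_compl_comm] using ht

lemma two_pow_card_mul_half_pow_card (s : Finset α) :
    (2 : ℝ) ^ Fintype.card α * (1 / 2) ^ #s = #{t : Finset α | s ⊆ t} := by
  rw [card_filter_superset, ← card_add_card_compl s, pow_add]
  push_cast
  rw [mul_right_comm, ← mul_pow]
  norm_num

lemma two_pow_card_mul_sum_eq_card_blocker_free (𝓜 : Finset (Finset α)) :
    (2 : ℝ) ^ Fintype.card α *
        ∑ T ∈ 𝓜.powerset, (-1 : ℝ) ^ #T * (1 / 2 : ℝ) ^ #(T.sup id) =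
      #{σ : Finset α | ∀ M ∈ 𝓜, ¬ M ⊆ σ} := by
  set S : Finset α → Finset (Finset α) := fun M => {σ | M ⊆ σ}
  have hinf (T : Finset (Finset α)) :
      T.inf S = ({σ | T.sup id ⊆ σ} : Finset (Finset α)) := by
    ext σ; simp [S, mem_finset_inf_iff, Finset.sup_le_iff]
  have hcompl :
      𝓜.inf (fun M => (S M)ᶜ) = ({σ | ∀ M ∈ 𝓜, ¬ M ⊆ σ} : Finset (Finset α)) := by
    ext σ; simp [S, mem_finset_inf_iff]
  have hie := inclusion_exclusion_card_inf_compl 𝓜 S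
  rw [hcompl] at hie
  rw [← Int.cast_natCast, hie, mul_sum]
  push_cast
  refine sum_congr rfl fun T _ => ?_
  rw [hinf, ← two_pow_card_mul_half_pow_card]
  ring

lemma two_pow_card_mul_sum_blockers_eq_card (Δ 𝓜 : Finset (Finset α))
    (hΔ : ∀ σ ∈ Δ, ∀ τ ⊆ σ, τ ∈ Δ) (h𝓜 : ∀ M, M ∈ 𝓜 ↔ M ∉ Δ ∧ ∀ τ ⊂ M, τ ∈ Δ) :
    (2 : ℝ) ^ Fintype.card α *
        ∑ T ∈ 𝓜.powerset, (-1 : ℝ) ^ #T * (1 / 2 : ℝ) ^ #(T.sup id) = #Δ := by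
  rw [two_pow_card_mul_sum_eq_card_blocker_free]
  congr
  ext σ
  simp [mem_iff_forall_blocker_not_subset Δ 𝓜 hΔ h𝓜 σ]

end

section AlexanderDual

variable {n : ℕ} (Δ : Finset (Finset (Fin n)))

lemma mem_alexDual {σ : Finset (Fin n)} : σ ∈ alexDual Δ ↔ σᶜ ∉ Δ := by
  simp only [alexDual, mem_image, mem_filter, mem_univ, true_and]
  exact ⟨fun ⟨τ, hτ, hτσ⟩ => hτσ ▸ (compl_compl τ).symm ▸ hτ, fun h => ⟨σᶜ, h, compl_compl σ⟩⟩

lemma alexDual_down_closed (hΔ : ∀ σ ∈ Δ, ∀ τ ⊆ σ, τ ∈ Δ) :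
    ∀ σ ∈ alexDual Δ, ∀ τ ⊆ σ, τ ∈ alexDual Δ := by
  simp only [mem_alexDual]
  exact fun σ hσ τ hτσ hτ => hσ (hΔ τᶜ hτ σᶜ (compl_subset_compl.mpr hτσ))

lemma card_alexDual_add_card : #(alexDual Δ) + #Δ = 2 ^ n := by
  have hcompl : ({σ | σ ∉ Δ} : Finset (Finset (Fin n))) = Δᶜ := by ext; simp
  rw [alexDual, hcompl, card_image_of_injective _ compl_injective, card_compl_add_card,
    Fintype.card_finset, Fintype.card_fin]

end AlexanderDual

theorem stmt_14_general (n : ℕ) (Δ : Finset (Finset (Fin n)))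
    (hΔ : ∀ σ ∈ Δ, ∀ τ ⊆ σ, τ ∈ Δ)
    (𝓜 : Finset (Finset (Fin n)))
    (h𝓜 : ∀ M, M ∈ 𝓜 ↔ M ∉ Δ ∧ ∀ τ ⊂ M, τ ∈ Δ)
    (𝓜' : Finset (Finset (Fin n)))
    (h𝓜' : ∀ M, M ∈ 𝓜' ↔ M ∉ alexDual Δ ∧ ∀ τ ⊂ M, τ ∈ alexDual Δ) :
    (∑ T ∈ 𝓜'.powerset, (-1 : ℝ) ^ T.card * (1 / 2 : ℝ) ^ (T.sup id).card) +
      (∑ T ∈ 𝓜.powerset, (-1 : ℝ) ^ T.card * (1 / 2 : ℝ) ^ (T.sup id).card) =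
      1 := by
  have hsum := two_pow_card_mul_sum_blockers_eq_card Δ 𝓜 hΔ h𝓜
  have hsum_dual := two_pow_card_mul_sum_blockers_eq_card (alexDual Δ) 𝓜'
    (alexDual_down_closed Δ hΔ) h𝓜'
  rw [Fintype.card_fin] at hsum hsum_dual
  refine mul_left_cancel₀ (pow_ne_zero n two_ne_zero) ?_
  rw [mul_add, hsum_dual, hsum, mul_one]
  exact_mod_cast card_alexDual_add_card Δ

theorem stmt_14 (n : ℕ) (Δ : Finset (Finset (Fin n)))
    (hΔ : ∀ σ ∈ Δ, ∀ τ ⊆ σ, τ ∈ Δ)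
    (h0 : ∅ ∈ Δ) (hne : Δ ≠ Finset.univ)
    (𝓜 : Finset (Finset (Fin n)))
    (h𝓜 : ∀ M, M ∈ 𝓜 ↔ M ∉ Δ ∧ ∀ τ ⊂ M, τ ∈ Δ)
    (𝓜' : Finset (Finset (Fin n)))
    (h𝓜' : ∀ M, M ∈ 𝓜' ↔ M ∉ alexDual Δ ∧ ∀ τ ⊂ M, τ ∈ alexDual Δ) :
    (∑ T ∈ 𝓜'.powerset, (-1 : ℝ) ^ T.card * (1 / 2 : ℝ) ^ (T.sup id).card) +
      (∑ T ∈ 𝓜.powerset, (-1 : ℝ) ^ T.card * (1 / 2 : ℝ) ^ (T.sup id).card) =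
      1 :=
  stmt_14_general n Δ hΔ 𝓜 h𝓜 𝓜' h𝓜'
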